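/- arXiv:1205.3525 — 2 statements merged into one kernel-verified Lean document; each statement's English description precedes it below -/
import Mathlib

section
/- For any primitive Dirichlet character ψ modulo m and any absolutely summable sequence of complex numbers (a_n) indexed by the integers, there exists θ ∈ [0,1] such that |∑_{n∈ℤ} a_n ψ(n) e(nθ)| ≥ (√m / φ(m)) · |∑_{(n,m)=1} a_n|, where e(x) = e^{2πix}. -/
/-!
Write `F θ = ∑ aₙ ψ(n) e(nθ)`. For primitive `ψ` the twisted Gauss sum `∑_v ψ(v) e(nv/m)` equals
`ψ̄(n) τ(ψ)` for every `n`, including those not coprime to `m`, where both sides vanish. Hence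
`∑_v ψ(v) F(v/m) = τ(ψ) ∑_{(n,m)=1} aₙ`. The left side has `φ(m)` nonzero terms, each of size at most
`max_v |F(v/m)|`, and `|τ(ψ)| = √m` follows from Fourier inversion on `ZMod m`.
-/

open Complex

noncomputable def e (x : ℝ) : ℂ := Complex.exp (2 * Real.pi * Complex.I * x)

open ZMod

lemma norm_e (x : ℝ) : ‖e x‖ = 1 := by
  rw [e, show 2 * Real.pi * I * x = ((2 * Real.pi * x : ℝ) : ℂ) * I by push_cast; ring,
    norm_exp_ofReal_mul_I]

lemma e_intCast_mul_val_div {m : ℕ} [NeZero m] (n : ℤ) (v : ZMod m) :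
    e (n * (v.val / m)) = stdAddChar ((n : ZMod m) * v) := by
  rw [show (n * v : ZMod m) = ((n * v.val : ℤ) : ZMod m) by push_cast [natCast_zmod_val]; rfl,
    stdAddChar_coe, e]
  congr 1
  have hm : (m : ℂ) ≠ 0 := NeZero.ne _
  push_cast
  field_simp

lemma ZMod.isUnit_intCast_iff_gcd_eq_one {m : ℕ} (n : ℤ) :
    IsUnit (n : ZMod m) ↔ Int.gcd n m = 1 := by
  rw [coe_int_isUnit_iff_isCoprime, isCoprime_comm, Int.isCoprime_iff_gcd_eq_one]

namespace DirichletCharacter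

lemma summable_mul_apply_mul_e {a : ℤ → ℂ} (ha : Summable fun n ↦ ‖a n‖)
    {N : ℕ} (χ : DirichletCharacter ℂ N) (θ : ℝ) :
    Summable fun n : ℤ ↦ a n * χ n * e (n * θ) :=
  .of_norm_bounded ha fun n ↦ by
    rw [norm_mul, norm_mul, norm_e, mul_one]
    exact mul_le_of_le_one_right (norm_nonneg _) (χ.norm_le_one _)

variable {N : ℕ} [NeZero N] {χ : DirichletCharacter ℂ N}

lemma IsPrimitive.gaussSum_mul_star (hχ : χ.IsPrimitive) :
    gaussSum χ stdAddChar * star (gaussSum χ stdAddChar) = N := by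
  have hstar : star (gaussSum χ stdAddChar) = 𝓕 ⇑χ⁻¹ 1 := by
    rw [star_gaussSum_eq, fourierTransform_eq_gaussSum_mulShift, AddChar.inv_mulShift]
  have hdft : 𝓕 (𝓕 χ) (-1) = N := by simp [dft_dft]
  rw [funext hχ.fourierTransform_eq_inv_mul_gaussSum, dft_mul_const,
    dft_comp_neg ⇑χ⁻¹] at hdft
  simpa [hstar, mul_comm] using hdft

lemma IsPrimitive.norm_gaussSum (hχ : χ.IsPrimitive) :
    ‖gaussSum χ stdAddChar‖ = Real.sqrt N := by
  have h : normSq (gaussSum χ stdAddChar) = N := by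
    exact_mod_cast (mul_conj _).symm.trans hχ.gaussSum_mul_star
  rw [← h, norm_def]

lemma IsPrimitive.mul_sum_mul_stdAddChar_eq_ite (hχ : χ.IsPrimitive) (n : ZMod N) :
    χ n * ∑ v, χ v * stdAddChar (n * v) = if IsUnit n then gaussSum χ stdAddChar else 0 := by
  have hshift : ∑ v, χ v * stdAddChar (n * v) = χ⁻¹ n * gaussSum χ stdAddChar := by
    simpa [gaussSum] using gaussSum_mulShift_of_isPrimitive stdAddChar hχ n
  split_ifs with hn
  · rw [hshift, ← mul_assoc, ← MulChar.mul_apply, mul_inv_cancel, MulChar.one_apply hn, one_mul]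
  · rw [χ.map_nonunit hn, zero_mul]

lemma IsPrimitive.sum_mul_tsum_mul_e (hχ : χ.IsPrimitive) {a : ℤ → ℂ}
    (ha : Summable fun n ↦ ‖a n‖) :
    ∑ v : ZMod N, χ v * ∑' n : ℤ, a n * χ n * e (n * (v.val / N)) =
      gaussSum χ stdAddChar * ∑' n : ℤ, (if Int.gcd n N = 1 then a n else 0) := by
  simp_rw [← tsum_mul_left]
  rw [← Summable.tsum_finsetSum fun v _ ↦ (summable_mul_apply_mul_e ha χ _).mul_left _]
  refine tsum_congr fun n ↦ ?_
  calc ∑ v, χ v * (a n * χ n * e (n * (v.val / N)))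
      = a n * (χ n * ∑ v, χ v * stdAddChar ((n : ZMod N) * v)) := by
        rw [Finset.mul_sum, Finset.mul_sum]
        refine Finset.sum_congr rfl fun v _ ↦ ?_
        rw [e_intCast_mul_val_div]
        ring
    _ = _ := by
        rw [hχ.mul_sum_mul_stdAddChar_eq_ite]
        simp only [isUnit_intCast_iff_gcd_eq_one]
        split_ifs <;> ring

lemma sum_mul_eq_sum_units (χ : DirichletCharacter ℂ N) (f : ZMod N → ℂ) :
    ∑ w, χ w * f w = ∑ u : (ZMod N)ˣ, χ u * f u := by
  refine (Fintype.sum_of_injective _ Units.val_injective _ _ (fun w hw ↦ ?_) fun _ ↦ rfl).symm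
  rw [χ.map_nonunit fun h ↦ hw ⟨h.unit, rfl⟩, zero_mul]

lemma exists_norm_sum_mul_le_totient_mul (χ : DirichletCharacter ℂ N) (f : ZMod N → ℂ) :
    ∃ v, ‖∑ w, χ w * f w‖ ≤ N.totient * ‖f v‖ := by
  obtain ⟨v, hv⟩ := Finite.exists_max fun w ↦ ‖f w‖
  refine ⟨v, ?_⟩
  calc ‖∑ w, χ w * f w‖ ≤ ∑ u : (ZMod N)ˣ, ‖χ u * f u‖ :=
        χ.sum_mul_eq_sum_units f ▸ norm_sum_le _ _
    _ ≤ ∑ _u : (ZMod N)ˣ, ‖f v‖ := by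
      gcongr with u; rw [norm_mul, χ.unit_norm_eq_one, one_mul]; exact hv u
    _ = N.totient * ‖f v‖ := by
      rw [Finset.sum_const, Finset.card_univ, card_units_eq_totient, nsmul_eq_mul]

end DirichletCharacter

/-- For any primitive Dirichlet character `ψ` mod `m` and any absolutely summable
sequence `(aₙ)` of complex numbers indexed by `ℤ`, there is `θ ∈ [0,1]` with
`|∑ aₙ ψ(n) e(nθ)| ≥ (√m / φ(m)) |∑_{(n,m)=1} aₙ|`. -/
theorem stmt0 (m : ℕ) [NeZero m] (ψ : DirichletCharacter ℂ m) (hψ : ψ.IsPrimitive)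
    (a : ℤ → ℂ) (ha : Summable fun n : ℤ => ‖a n‖) :
    ∃ θ ∈ Set.Icc (0 : ℝ) 1,
      (Real.sqrt m / Nat.totient m) *
          ‖∑' n : ℤ, (if Int.gcd n m = 1 then a n else 0)‖ ≤
        ‖∑' n : ℤ, a n * ψ (n : ZMod m) * e (n * θ)‖ := by
  obtain ⟨v, hv⟩ := ψ.exists_norm_sum_mul_le_totient_mul
    fun v ↦ ∑' n : ℤ, a n * ψ n * e (n * (v.val / m))
  rw [hψ.sum_mul_tsum_mul_e ha, norm_mul, hψ.norm_gaussSum] at hv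
  have hm : (0 : ℝ) < m := Nat.cast_pos.mpr (Nat.pos_of_neZero m)
  have hφ : (0 : ℝ) < m.totient := Nat.cast_pos.mpr (Nat.totient_pos.mpr (Nat.pos_of_neZero m))
  refine ⟨v.val / m, ⟨by positivity, div_le_one_of_le₀ (mod_cast v.val_lt.le) hm.le⟩, ?_⟩
  rw [div_mul_eq_mul_div, div_le_iff₀ hφ]
  linarith
end

section
/- Let χ mod q be a Dirichlet character with χ(-1) = -1 and χ(n) = 1 for all positive n ≤ x, let ψ mod m be a Dirichlet character with ψ(-1) = -1 and m prime, and suppose ψ is primitive. Then there exists θ ∈ [0,1] with |∑_{1 ≤ |n| ≤ x} (χ(n)ψ(n)/n) e(nθ)| ≥ (√m/φ(m)) ∑_{n ≤ x} 1/n. -/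
/-!
Average `S(θ) = ∑ aₙ ψ(n) e(nθ)` against `ψ` over the points `θ = b/m`. Since `ψ` is
primitive, `∑_b ψ(b) e(nb/m) = ψ⁻¹(n) τ(ψ)`, so `∑_b ψ(b) S(b/m) = τ(ψ) ∑_{(n,m)=1} aₙ`
with `|τ(ψ)| = √m`; as `|ψ|` is supported on the `φ(m)` units, some `|S(b/m)|` is at least
`√m/φ(m) |∑_{(n,m)=1} aₙ|`. For `aₙ = χ(n)/n` the oddness of `χ` makes the terms at `±n`
agree, so that sum is `2 ∑_{n ≤ x, m ∤ n} 1/n`, which dominates the full harmonic sum.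
-/

open Complex

open Finset

namespace DirichletCharacter

variable {m : ℕ} [NeZero m]

lemma sum_norm_eq_totient (ψ : DirichletCharacter ℂ m) : ∑ b, ‖ψ b‖ = m.totient := by
  classical
  calc ∑ b, ‖ψ b‖ = ∑ b, (1 : MulChar (ZMod m) ℝ) b := by
        refine sum_congr rfl fun b _ => ?_
        by_cases hb : IsUnit b
        · rw [MulChar.one_apply hb, ← hb.unit_spec, ψ.unit_norm_eq_one]
        · rw [MulChar.map_nonunit _ hb, MulChar.map_nonunit _ hb, norm_zero]
    _ = m.totient := by rw [MulChar.sum_one_eq_card_units, ZMod.card_units_eq_totient]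

lemma exists_norm_sum_mul_le_totient_mul_s17 (ψ : DirichletCharacter ℂ m) (F : ZMod m → ℂ) :
    ∃ b, ‖∑ b, ψ b * F b‖ ≤ m.totient * ‖F b‖ := by
  obtain ⟨b₀, -, hb₀⟩ := exists_max_image univ (‖F ·‖) univ_nonempty
  refine ⟨b₀, ?_⟩
  calc ‖∑ b, ψ b * F b‖ ≤ ∑ b, ‖ψ b‖ * ‖F b‖ := by
        simpa only [norm_mul] using norm_sum_le univ (fun b => ψ b * F b)
    _ ≤ ∑ b, ‖ψ b‖ * ‖F b₀‖ :=
        sum_le_sum fun b hb => mul_le_mul_of_nonneg_left (hb₀ b hb) (norm_nonneg _)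
    _ = m.totient * ‖F b₀‖ := by rw [← sum_mul, ψ.sum_norm_eq_totient]

lemma e_intCast_mul_val_div (n : ℤ) (b : ZMod m) :
    e (n * (b.val / m)) = ZMod.stdAddChar ((n : ZMod m) * b) := by
  have hnb : (n : ZMod m) * b = ((n * b.val : ℤ) : ZMod m) := by
    push_cast
    rw [ZMod.natCast_zmod_val]
  rw [hnb, ZMod.stdAddChar_coe, e]
  push_cast
  ring_nf

lemma sum_mul_e_eq_inv_mul_gaussSum {ψ : DirichletCharacter ℂ m} (hψ : ψ.IsPrimitive) (n : ℤ) :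
    ∑ b, ψ b * e (n * (b.val / m)) = ψ⁻¹ n * gaussSum ψ ZMod.stdAddChar := by
  simp_rw [e_intCast_mul_val_div, ← AddChar.mulShift_apply]
  exact gaussSum_mulShift_of_isPrimitive _ hψ n

lemma norm_gaussSum_eq_sqrt (hm : m.Prime) {ψ : DirichletCharacter ℂ m} (hψ : ψ ≠ 1) :
    ‖gaussSum ψ ZMod.stdAddChar‖ = √m := by
  have : Fact m.Prime := ⟨hm⟩
  have h := gaussSum_mul_gaussSum_eq_card hψ (ZMod.isPrimitive_stdAddChar m)
  rw [← star_gaussSum_eq, ZMod.card, RCLike.star_def, Complex.mul_conj] at h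
  rw [Complex.norm_def, show normSq _ = (m : ℝ) by exact_mod_cast h]

lemma ne_one_of_isPrimitive (hm : m ≠ 1) {ψ : DirichletCharacter ℂ m} (hψ : ψ.IsPrimitive) :
    ψ ≠ 1 := by
  rintro rfl
  rw [isPrimitive_def, conductor_one] at hψ
  exact hm hψ.symm

lemma apply_mul_inv_apply (ψ : DirichletCharacter ℂ m) (a : ZMod m) :
    ψ a * ψ⁻¹ a = if IsUnit a then 1 else 0 := by
  rw [mul_comm, ← Pi.mul_apply, ← MulChar.coeToFun_mul, MulChar.inv_mul]
  split_ifs with ha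
  · exact MulChar.one_apply ha
  · exact MulChar.map_nonunit _ ha

lemma sum_mul_sum_e_eq_gaussSum_mul {ψ : DirichletCharacter ℂ m} (hψ : ψ.IsPrimitive)
    (s : Finset ℤ) (a : ℤ → ℂ) :
    ∑ b, ψ b * ∑ n ∈ s, a n * ψ n * e (n * (b.val / m)) =
      gaussSum ψ ZMod.stdAddChar * ∑ n ∈ s with IsUnit ((n : ℤ) : ZMod m), a n := by
  simp_rw [mul_sum]
  rw [sum_comm, sum_filter]
  refine sum_congr rfl fun n _ => ?_
  calc ∑ b, ψ b * (a n * ψ n * e (n * (b.val / m)))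
      = a n * ψ n * ∑ b, ψ b * e (n * (b.val / m)) := by
        rw [mul_sum]; exact sum_congr rfl fun b _ => by ring
    _ = gaussSum ψ ZMod.stdAddChar * (a n * (ψ n * ψ⁻¹ n)) := by
        rw [sum_mul_e_eq_inv_mul_gaussSum hψ]; ring
    _ = _ := by rw [ψ.apply_mul_inv_apply]; split_ifs <;> simp

theorem exists_sqrt_div_totient_mul_le_norm_sum (hm : m.Prime) {ψ : DirichletCharacter ℂ m}
    (hψ : ψ.IsPrimitive) (s : Finset ℤ) (a : ℤ → ℂ) :
    ∃ θ ∈ Set.Icc (0 : ℝ) 1, √m / m.totient * ‖∑ n ∈ s with IsUnit ((n : ℤ) : ZMod m), a n‖ ≤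
      ‖∑ n ∈ s, a n * ψ n * e (n * θ)‖ := by
  obtain ⟨b, hb⟩ := ψ.exists_norm_sum_mul_le_totient_mul_s17
    fun b => ∑ n ∈ s, a n * ψ n * e (n * (b.val / m))
  rw [sum_mul_sum_e_eq_gaussSum_mul hψ, norm_mul,
    norm_gaussSum_eq_sqrt hm (ne_one_of_isPrimitive hm.ne_one hψ)] at hb
  have hm0 : (0 : ℝ) < m := by exact_mod_cast hm.pos
  refine ⟨b.val / m, ⟨by positivity, div_le_one_of_le₀ (by exact_mod_cast b.val_lt.le) hm0.le⟩,
    ?_⟩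
  rw [div_mul_eq_mul_div, div_le_iff₀ (by exact_mod_cast m.totient_pos.mpr hm.pos)]
  linarith

end DirichletCharacter

lemma sum_Icc_neg_filter_ne_zero {M : Type*} [AddCommMonoid M] (g : ℤ → M) (N : ℕ) :
    ∑ n ∈ Icc (-(N : ℤ)) N with n ≠ 0, g n = ∑ k ∈ Icc 1 N, (g k + g (-k)) := by
  rw [sum_add_distrib, ← sum_filter_add_sum_filter_not _ (0 < ·)]
  congr 1
  · refine sum_nbij' Int.toNat (↑) ?_ ?_ ?_ ?_ ?_ <;> intro n hn <;>
      simp only [mem_filter, mem_Icc] at hn ⊢ <;> first | omega | congr 1; omega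
  · refine sum_nbij' (fun n => (-n).toNat) (fun k => -k) ?_ ?_ ?_ ?_ ?_ <;> intro n hn <;>
      simp only [mem_filter, mem_Icc] at hn ⊢ <;> first | omega | congr 1; omega

lemma sum_one_div_le_two_mul_sum_not_dvd {m : ℕ} (hm : 2 ≤ m) (N : ℕ) :
    ∑ n ∈ Icc 1 N, (1 : ℝ) / n ≤ 2 * ∑ n ∈ Icc 1 N with ¬ m ∣ n, (1 : ℝ) / n := by
  rw [← sum_filter_add_sum_filter_not (Icc 1 N) (m ∣ ·)]
  suffices ∑ n ∈ Icc 1 N with m ∣ n, (1 : ℝ) / n ≤ ∑ n ∈ Icc 1 N with ¬ m ∣ n, (1 : ℝ) / n by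
    linarith
  have two_le : ∀ n ∈ {n ∈ Icc 1 N | m ∣ n}, 2 ≤ n := fun n hn => by
    simp only [mem_filter, mem_Icc] at hn
    exact hm.trans (Nat.le_of_dvd hn.1.1 hn.2)
  -- Shifting each multiple of `m` down by one lands on a non-multiple with a larger reciprocal.
  calc ∑ n ∈ Icc 1 N with m ∣ n, (1 : ℝ) / n
      ≤ ∑ n ∈ Icc 1 N with m ∣ n, (1 : ℝ) / ((n - 1 : ℕ) : ℝ) := by
        refine sum_le_sum fun n hn => ?_
        have hn2 := two_le n hn
        have hn2' : (2 : ℝ) ≤ n := by exact_mod_cast hn2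
        rw [Nat.cast_pred (by omega)]
        exact one_div_le_one_div_of_le (by linarith) (by linarith)
    _ = ∑ k ∈ {n ∈ Icc 1 N | m ∣ n}.image (fun n : ℕ => n - 1), (1 : ℝ) / k := by
        refine (sum_image (f := fun k : ℕ => (1 : ℝ) / k) fun a ha b hb hab => ?_).symm
        have := two_le a ha; have := two_le b hb
        omega
    _ ≤ ∑ n ∈ Icc 1 N with ¬ m ∣ n, (1 : ℝ) / n := by
        refine sum_le_sum_of_subset_of_nonneg ?_ fun _ _ _ => by positivity
        intro k hk
        obtain ⟨n, hn, rfl⟩ := mem_image.mp hk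
        have := two_le n hn
        simp only [mem_filter, mem_Icc] at hn ⊢
        refine ⟨⟨by omega, by omega⟩, fun hdvd => ?_⟩
        have hdvd_one := Nat.dvd_sub hn.2 hdvd
        rw [show n - (n - 1) = 1 by omega, Nat.dvd_one] at hdvd_one
        omega

lemma sum_isUnit_apply_div_eq_two_mul_sum_not_dvd {m : ℕ} [NeZero m] (hm : m.Prime) {q : ℕ}
    (χ : DirichletCharacter ℂ q) (hχodd : χ (-1) = -1) (N : ℕ)
    (hχsmall : ∀ n : ℕ, 0 < n → n ≤ N → χ n = 1) :
    ∑ n ∈ {n ∈ Icc (-(N : ℤ)) N | n ≠ 0} with IsUnit ((n : ℤ) : ZMod m), χ n / n =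
      ((2 * ∑ n ∈ Icc 1 N with ¬ m ∣ n, (1 : ℝ) / n : ℝ) : ℂ) := by
  rw [sum_filter, sum_Icc_neg_filter_ne_zero]
  push_cast
  rw [sum_filter, mul_sum]
  refine sum_congr rfl fun k hk => ?_
  rw [mem_Icc] at hk
  have hunit : IsUnit (k : ZMod m) ↔ ¬ m ∣ k :=
    (ZMod.isUnit_iff_coprime k m).trans (Nat.coprime_comm.trans hm.coprime_iff_not_dvd)
  have hχk : χ k = 1 := hχsmall k (by omega) hk.2
  have hχneg : χ (-k) = -1 := by rw [neg_eq_neg_one_mul, map_mul, hχodd, hχk, mul_one]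
  simp only [IsUnit.neg_iff, hunit, hχneg, hχk]
  split_ifs <;> ring

theorem stmt17_general (q m : ℕ) [NeZero q] (hm : m.Prime) (x : ℝ)
    (χ : DirichletCharacter ℂ q) (hχodd : χ (-1) = -1)
    (hχsmall : ∀ n : ℕ, 0 < n → (n : ℝ) ≤ x → χ (n : ZMod q) = 1)
    (ψ : DirichletCharacter ℂ m) (hψprim : ψ.IsPrimitive) :
    ∃ θ ∈ Set.Icc (0 : ℝ) 1,
      (Real.sqrt m / Nat.totient m) * ∑ n ∈ Finset.Icc 1 ⌊x⌋₊, (1 : ℝ) / n ≤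
        ‖∑ n ∈ (Finset.Icc (-(⌊x⌋₊ : ℤ)) ⌊x⌋₊).filter (fun n => n ≠ 0),
            χ (n : ZMod q) * ψ (n : ZMod m) / (n : ℂ) * e (n * θ)‖ := by
  have : NeZero m := ⟨hm.ne_zero⟩
  obtain ⟨θ, hθ, hS⟩ := DirichletCharacter.exists_sqrt_div_totient_mul_le_norm_sum hm hψprim
    ((Finset.Icc (-(⌊x⌋₊ : ℤ)) ⌊x⌋₊).filter (fun n => n ≠ 0)) (fun n => χ n / n)
  rw [sum_isUnit_apply_div_eq_two_mul_sum_not_dvd hm χ hχodd ⌊x⌋₊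
      fun n hn hnx => hχsmall n hn ((Nat.le_floor_iff' hn.ne').mp hnx),
    norm_real, Real.norm_of_nonneg (by positivity)] at hS
  refine ⟨θ, hθ, ?_⟩
  calc √m / m.totient * ∑ n ∈ Icc 1 ⌊x⌋₊, (1 : ℝ) / n
      ≤ √m / m.totient * (2 * ∑ n ∈ Icc 1 ⌊x⌋₊ with ¬ m ∣ n, (1 : ℝ) / n) :=
        mul_le_mul_of_nonneg_left (sum_one_div_le_two_mul_sum_not_dvd hm.two_le _)
          (by positivity)
    _ ≤ _ := hS
    _ = _ := by
        congr 1
        exact sum_congr rfl fun n _ => by ring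

/-- Let `χ` mod `q` be a Dirichlet character with `χ(-1) = -1` and `χ(n) = 1` for all
positive `n ≤ x`, and `ψ` mod `m` an odd primitive Dirichlet character with `m` prime.
Then there is `θ ∈ [0,1]` with
`|∑_{1 ≤ |n| ≤ x} (χ(n)ψ(n)/n) e(nθ)| ≥ (√m/φ(m)) ∑_{n ≤ x} 1/n`. -/
theorem stmt17 (q m : ℕ) [NeZero q] (hm : m.Prime) (x : ℝ)
    (χ : DirichletCharacter ℂ q) (hχodd : χ (-1) = -1)
    (hχsmall : ∀ n : ℕ, 0 < n → (n : ℝ) ≤ x → χ (n : ZMod q) = 1)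
    (ψ : DirichletCharacter ℂ m) (hψprim : ψ.IsPrimitive) (hψodd : ψ (-1) = -1) :
    ∃ θ ∈ Set.Icc (0 : ℝ) 1,
      (Real.sqrt m / Nat.totient m) * ∑ n ∈ Finset.Icc 1 ⌊x⌋₊, (1 : ℝ) / n ≤
        ‖∑ n ∈ (Finset.Icc (-(⌊x⌋₊ : ℤ)) ⌊x⌋₊).filter (fun n => n ≠ 0),
            χ (n : ZMod q) * ψ (n : ZMod m) / (n : ℂ) * e (n * θ)‖ :=
  stmt17_general q m hm x χ hχodd hχsmall ψ hψprim
end
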